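/- arXiv:math/0406545 — 4 statements merged into one kernel-verified Lean document; each statement's English description precedes it below -/
import Mathlib

section
/- Let B be a skew-symmetrizable integer matrix and suppose indices i₁, …, i_r form a cycle in the diagram Γ(B) (i.e., b_{i_j i_{j+1}} ≠ 0 for all j, indices mod r). Then the product of the edge weights |b_{i_j i_{j+1}} b_{i_{j+1} i_j}| over the cycle is a perfect square. -/
open Finset

/-- An integer matrix `B` is skew-symmetrizable if there exists a diagonal matrix `D`
with positive diagonal entries such that `D * B` is skew-symmetric. -/
def SkewSymmetrizable {n : ℕ} (B : Matrix (Fin n) (Fin n) ℤ) : Prop :=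
  ∃ D : Fin n → ℚ, (∀ i, 0 < D i) ∧ ∀ i j, D i * (B i j : ℚ) = -(D j * (B j i : ℚ))

/-- If indices `i₁, …, i_r` form a cycle in the diagram `Γ(B)` of a skew-symmetrizable
matrix `B` (i.e. `b_{i_j i_{j+1}} ≠ 0` for all `j`, indices mod `r`), then the product of
the edge weights `|b_{i_j i_{j+1}} b_{i_{j+1} i_j}|` over the cycle is a perfect square. -/
theorem stmt1 {n : ℕ} (B : Matrix (Fin n) (Fin n) ℤ) (hB : SkewSymmetrizable B)
    (r : ℕ) [NeZero r] (hr : 3 ≤ r) (i : Fin r → Fin n)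
    (hcyc : ∀ j : Fin r, B (i j) (i (j + 1)) ≠ 0) :
    ∃ s : ℕ, (∏ j : Fin r, (B (i j) (i (j + 1)) * B (i (j + 1)) (i j)).natAbs) = s ^ 2 := by
  obtain ⟨D, hD, hskew⟩ := hB
  refine ⟨∏ j : Fin r, (B (i j) (i (j + 1))).natAbs, ?_⟩
  have key : ∀ j : Fin r, (((B (i j) (i (j + 1)) * B (i (j + 1)) (i j)).natAbs : ℚ))
      = (D (i j) / D (i (j + 1))) * (((B (i j) (i (j + 1))).natAbs : ℚ)) ^ 2 := by
    intro j
    have h := hskew (i j) (i (j + 1))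
    have hk : (0 : ℚ) < D (i (j + 1)) := hD _
    have hj : (0 : ℚ) < D (i j) := hD _
    have hb : (B (i (j + 1)) (i j) : ℚ)
        = -(D (i j) / D (i (j + 1))) * (B (i j) (i (j + 1)) : ℚ) := by
      field_simp
      linarith [h]
    rw [Nat.cast_natAbs, Nat.cast_natAbs]
    push_cast
    rw [hb, abs_mul, abs_mul, abs_neg, abs_div, abs_of_pos hj, abs_of_pos hk]
    ring
  have hcast : ((∏ j : Fin r, (B (i j) (i (j + 1)) * B (i (j + 1)) (i j)).natAbs : ℕ) : ℚ)
      = ((∏ j : Fin r, (B (i j) (i (j + 1))).natAbs : ℕ) : ℚ) ^ 2 := by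
    push_cast
    rw [Finset.prod_congr rfl (fun j _ => key j), Finset.prod_mul_distrib,
      Finset.prod_div_distrib]
    have hshift : ∏ j : Fin r, D (i (j + 1)) = ∏ j : Fin r, D (i j) :=
      Fintype.prod_equiv (Equiv.addRight (1 : Fin r)) _ _ (fun j => rfl)
    rw [hshift, div_self (Finset.prod_pos (fun j _ => hD (i j))).ne', one_mul,
      Finset.prod_pow]
  exact_mod_cast hcast
end

section
/- Let V be a finite-dimensional vector space over the field F₂ with an F₂-valued bilinear form Ω, and let U ⊆ V be a subspace of codimension one. Define U₀ = {u ∈ U : Ω(u,u') = 0 for all u' ∈ U}, and given an F₂-valued quadratic form Q on V with associated bilinear form Ω, set U₀₀ = U₀ ∩ Q⁻¹(0), and similarly V₀, V₀₀ for V. Then dim(V₀₀) ≥ dim(U₀₀) − 1. -/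
/-- Let `V` be a finite-dimensional `F₂`-vector space with a bilinear form `Ω` and a
quadratic form `Q` satisfying `Q(u+v) = Q(u) + Q(v) + Ω(u,v)`.  If `U ≤ V` has
codimension one, and `U₀₀` (resp. `V₀₀`) is the subspace of vectors of `U` (resp. `V`)
that pair trivially with all of `U` (resp. `V`) and lie in `Q⁻¹(0)`, then
`dim V₀₀ ≥ dim U₀₀ − 1`. -/
theorem stmt5 {V : Type*} [AddCommGroup V] [Module (ZMod 2) V]
    [FiniteDimensional (ZMod 2) V]
    (Ω : V →ₗ[ZMod 2] V →ₗ[ZMod 2] ZMod 2) (Q : V → ZMod 2)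
    (hQ : ∀ u v, Q (u + v) = Q u + Q v + Ω u v)
    (U : Submodule (ZMod 2) V)
    (hU : Module.finrank (ZMod 2) V = Module.finrank (ZMod 2) U + 1)
    (U00 V00 : Submodule (ZMod 2) V)
    (hU00 : ∀ x, x ∈ U00 ↔ x ∈ U ∧ (∀ u ∈ U, Ω x u = 0) ∧ Q x = 0)
    (hV00 : ∀ x, x ∈ V00 ↔ (∀ v : V, Ω x v = 0) ∧ Q x = 0) :
    Module.finrank (ZMod 2) U00 ≤ Module.finrank (ZMod 2) V00 + 1 := by
  classical
  have hUne : U ≠ ⊤ := by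
    intro h
    rw [h, finrank_top] at hU
    omega
  have hex : ∃ v, v ∉ U := by
    by_contra h
    push_neg at h
    exact hUne (Submodule.eq_top_iff'.2 h)
  obtain ⟨v, hv⟩ := hex
  have hsup : U ⊔ Submodule.span (ZMod 2) {v} = ⊤ := by
    apply Submodule.eq_top_of_finrank_eq
    have h1 : U < U ⊔ Submodule.span (ZMod 2) {v} := by
      refine lt_of_le_of_ne le_sup_left ?_
      intro h
      exact hv (h ▸ Submodule.mem_sup_right (Submodule.mem_span_singleton_self v))
    have h2 := Submodule.finrank_lt_finrank_of_lt h1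
    have h3 := Submodule.finrank_le (U ⊔ Submodule.span (ZMod 2) {v})
    omega
  have key : ∀ x ∈ U00, Ω x v = 0 → x ∈ V00 := by
    intro x hx hxv
    rw [hU00] at hx
    obtain ⟨hxU, hΩ, hQx⟩ := hx
    rw [hV00]
    refine ⟨fun w => ?_, hQx⟩
    have hw : w ∈ U ⊔ Submodule.span (ZMod 2) {v} := hsup ▸ Submodule.mem_top
    obtain ⟨u, hu, s, hs, rfl⟩ := Submodule.mem_sup.1 hw
    obtain ⟨c, rfl⟩ := Submodule.mem_span_singleton.1 hs
    simp [hΩ u hu, hxv]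
  set L : U00 →ₗ[ZMod 2] ZMod 2 := (Ω.flip v).domRestrict U00 with hL
  have hrank := LinearMap.finrank_range_add_finrank_ker L
  have hr : Module.finrank (ZMod 2) (LinearMap.range L) ≤ 1 := by
    have := Submodule.finrank_le (LinearMap.range L)
    simpa using this
  have hker : Module.finrank (ZMod 2) (LinearMap.ker L) ≤
      Module.finrank (ZMod 2) V00 := by
    let g : LinearMap.ker L →ₗ[ZMod 2] V :=
      U00.subtype.comp (Submodule.subtype _)
    have hg : ∀ x : LinearMap.ker L, g x ∈ V00 := by
      intro x
      exact key _ x.1.2 x.2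
    have hf : Function.Injective (LinearMap.codRestrict V00 g hg) := by
      intro a b h
      have h' : g a = g b := by
        have := Subtype.ext_iff.1 h
        simpa using this
      exact Subtype.ext (Subtype.ext h')
    exact LinearMap.finrank_le_finrank_of_injective hf
  omega
end

section
/- Let Q be an F₂-valued quadratic form on a finite-dimensional F₂-vector space V with associated alternating bilinear form Ω, and suppose Ω is nondegenerate on V, so that V admits a symplectic basis e₁, f₁, …, e_r, f_r (with Ω(e_i, f_j) = δ_{ij}, Ω(e_i,e_j) = Ω(f_i,f_j) = 0). Then the Arf invariant Σ Q(e_i)Q(f_i) does not depend on the choice of symplectic basis. -/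
/-!
The Gauss sum `∑ v, (-1)^(Q v)` does not mention any basis. For a symplectic basis, `V` is the
orthogonal sum of the hyperbolic planes `⟨e i, f i⟩`, on which `Q` is additive, so the Gauss sum
is the product of the Gauss sums of the planes; a plane contributes
`1 + (-1)^(Q f) + (-1)^(Q e) + (-1)^(Q e + Q f + 1) = 2 * (-1)^(Q e * Q f)`.
Hence the Gauss sum equals `2^r * (-1)^Arf`, which determines the Arf invariant.
-/

open Finset

def signChar : AddChar (ZMod 2) ℤ where
  toFun t := if t = 0 then 1 else -1
  map_zero_eq_one' := rfl
  map_add_eq_mul' := by decide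

lemma signChar_injective : Function.Injective signChar := by
  intro a b; revert a b; decide

lemma signChar_sum {ι : Type*} (s : Finset ι) (c : ι → ZMod 2) :
    signChar (∑ i ∈ s, c i) = ∏ i ∈ s, signChar (c i) := by
  induction s using Finset.cons_induction with
  | empty => simp
  | cons a s ha ih => rw [sum_cons, prod_cons, AddChar.map_add_eq_mul, ih]

lemma signChar_hyperbolic (a b : ZMod 2) :
    1 + signChar b + (signChar a + signChar (a + b + 1)) = 2 * signChar (a * b) := by
  revert a b; decide

section
variable {V : Type*} [AddCommGroup V] [Module (ZMod 2) V]
  {Ω : V →ₗ[ZMod 2] V →ₗ[ZMod 2] ZMod 2} {Q : V → ZMod 2}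

lemma quad_zero (hQ : ∀ u v, Q (u + v) = Q u + Q v + Ω u v) : Q 0 = 0 := by
  simpa using hQ 0 0

lemma polar_comm (hQ : ∀ u v, Q (u + v) = Q u + Q v + Ω u v) (u v : V) : Ω u v = Ω v u := by
  have h := hQ u v
  rw [add_comm u, hQ v u] at h
  linear_combination -h

lemma quad_sum_of_pairwise_polar_eq_zero (hQ : ∀ u v, Q (u + v) = Q u + Q v + Ω u v)
    {ι : Type*} (s : Finset ι) (w : ι → V)
    (hw : (s : Set ι).Pairwise fun i j => Ω (w i) (w j) = 0) :
    Q (∑ i ∈ s, w i) = ∑ i ∈ s, Q (w i) := by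
  induction s using Finset.cons_induction with
  | empty => simpa using quad_zero hQ
  | cons a s ha ih =>
    rw [coe_cons, Set.pairwise_insert] at hw
    have horth : Ω (w a) (∑ i ∈ s, w i) = 0 := by
      rw [map_sum]
      exact sum_eq_zero fun j hj => (hw.2 j hj (by rintro rfl; exact ha hj)).1
    rw [sum_cons, sum_cons, hQ, ih hw.1, horth, add_zero]

lemma sum_signChar_quad_hyperbolicPlane (hQ : ∀ u v, Q (u + v) = Q u + Q v + Ω u v) {e f : V}
    (hef : Ω e f = 1) :
    ∑ p : ZMod 2 × ZMod 2, signChar (Q (p.1 • e + p.2 • f)) = 2 * signChar (Q e * Q f) := by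
  have sum_two : ∀ g : ZMod 2 → ℤ, ∑ x, g x = g 0 + g 1 := Fin.sum_univ_two
  have hQef : Q (e + f) = Q e + Q f + 1 := by rw [hQ, hef]
  simp only [Fintype.sum_prod_type, sum_two, zero_smul, one_smul, zero_add, add_zero,
    quad_zero hQ, hQef]
  exact signChar_hyperbolic (Q e) (Q f)

lemma sum_eq_sum_symplecticCoords {ι M : Type*} [Fintype ι] [DecidableEq ι] [AddCommMonoid M]
    [Fintype V] (b : Module.Basis (ι ⊕ ι) (ZMod 2) V) (e f : ι → V)
    (hbe : ∀ i, b (Sum.inl i) = e i ∧ b (Sum.inr i) = f i) (g : V → M) :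
    ∑ v, g v = ∑ c : ι → ZMod 2 × ZMod 2, g (∑ i, ((c i).1 • e i + (c i).2 • f i)) := by
  let coords : (ι → ZMod 2 × ZMod 2) ≃ V :=
    (Equiv.arrowProdEquivProdArrow ι _ _).trans <|
      (Equiv.sumArrowEquivProdArrow ι ι _).symm.trans b.equivFun.symm.toEquiv
  rw [← coords.sum_comp]
  refine Fintype.sum_congr _ _ fun c => congrArg g ?_
  simp [coords, Module.Basis.equivFun_symm_apply, Fintype.sum_sum_type, sum_add_distrib, hbe]

lemma sum_signChar_quad_eq_two_pow_mul (hQ : ∀ u v, Q (u + v) = Q u + Q v + Ω u v)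
    {ι : Type*} [Fintype ι] [DecidableEq ι] [Fintype V]
    (b : Module.Basis (ι ⊕ ι) (ZMod 2) V) (e f : ι → V)
    (hbe : ∀ i, b (Sum.inl i) = e i ∧ b (Sum.inr i) = f i)
    (hef : ∀ i j, Ω (e i) (f j) = if i = j then 1 else 0)
    (hee : ∀ i j, Ω (e i) (e j) = 0) (hff : ∀ i j, Ω (f i) (f j) = 0) :
    ∑ v, signChar (Q v) = 2 ^ Fintype.card ι * signChar (∑ i, Q (e i) * Q (f i)) := by
  have horth (c : ι → ZMod 2 × ZMod 2) : ((univ : Finset ι) : Set ι).Pairwise fun i j =>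
      Ω ((c i).1 • e i + (c i).2 • f i) ((c j).1 • e j + (c j).2 • f j) = 0 := by
    intro i _ j _ hij
    simp [hee, hff, hef, polar_comm hQ (f i), hij, Ne.symm hij]
  rw [sum_eq_sum_symplecticCoords b e f hbe, signChar_sum]
  simp only [quad_sum_of_pairwise_polar_eq_zero hQ _ _ (horth _), signChar_sum]
  rw [← Fintype.prod_sum fun i (p : ZMod 2 × ZMod 2) => signChar (Q (p.1 • e i + p.2 • f i))]
  have hplane (i : ι) := sum_signChar_quad_hyperbolicPlane hQ (by simpa using hef i i)
  simp only [hplane, prod_mul_distrib, prod_const, card_univ]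

end

theorem stmt7_general {V : Type*} [AddCommGroup V] [Module (ZMod 2) V]
    (Ω : V →ₗ[ZMod 2] V →ₗ[ZMod 2] ZMod 2)
    (Q : V → ZMod 2) (hQ : ∀ u v, Q (u + v) = Q u + Q v + Ω u v)
    (r : ℕ) (e f e' f' : Fin r → V)
    -- `e₁,f₁,…,e_r,f_r` is a basis of `V`
    (hb : ∃ b : Module.Basis (Fin r ⊕ Fin r) (ZMod 2) V,
      ∀ i, b (Sum.inl i) = e i ∧ b (Sum.inr i) = f i)
    -- `e'₁,f'₁,…,e'_r,f'_r` is a basis of `V`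
    (hb' : ∃ b : Module.Basis (Fin r ⊕ Fin r) (ZMod 2) V,
      ∀ i, b (Sum.inl i) = e' i ∧ b (Sum.inr i) = f' i)
    -- both bases are symplectic
    (hef : ∀ i j, Ω (e i) (f j) = if i = j then 1 else 0)
    (hee : ∀ i j, Ω (e i) (e j) = 0) (hff : ∀ i j, Ω (f i) (f j) = 0)
    (hef' : ∀ i j, Ω (e' i) (f' j) = if i = j then 1 else 0)
    (hee' : ∀ i j, Ω (e' i) (e' j) = 0) (hff' : ∀ i j, Ω (f' i) (f' j) = 0) :
    ∑ i : Fin r, Q (e i) * Q (f i) = ∑ i : Fin r, Q (e' i) * Q (f' i) := by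
  obtain ⟨b, hbe⟩ := hb
  obtain ⟨b', hbe'⟩ := hb'
  let : Fintype V := Module.fintypeOfFintype b
  have h := sum_signChar_quad_eq_two_pow_mul hQ b e f hbe hef hee hff
  have h' := sum_signChar_quad_eq_two_pow_mul hQ b' e' f' hbe' hef' hee' hff'
  exact signChar_injective (mul_left_cancel₀ (by positivity) (h.symm.trans h'))

/-- The Arf invariant `Σ Q(e_i)Q(f_i)` of a quadratic form `Q` on a finite-dimensional
`F₂`-vector space `V`, whose associated alternating bilinear form `Ω` is nondegenerate,
does not depend on the choice of symplectic basis `e₁,f₁,…,e_r,f_r`. -/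
theorem stmt7 {V : Type*} [AddCommGroup V] [Module (ZMod 2) V]
    [FiniteDimensional (ZMod 2) V]
    (Ω : V →ₗ[ZMod 2] V →ₗ[ZMod 2] ZMod 2)
    (halt : ∀ v, Ω v v = 0)
    (hnd : ∀ v, (∀ u, Ω v u = 0) → v = 0)
    (Q : V → ZMod 2) (hQ : ∀ u v, Q (u + v) = Q u + Q v + Ω u v)
    (r : ℕ) (e f e' f' : Fin r → V)
    -- `e₁,f₁,…,e_r,f_r` is a basis of `V`
    (hb : ∃ b : Module.Basis (Fin r ⊕ Fin r) (ZMod 2) V,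
      ∀ i, b (Sum.inl i) = e i ∧ b (Sum.inr i) = f i)
    -- `e'₁,f'₁,…,e'_r,f'_r` is a basis of `V`
    (hb' : ∃ b : Module.Basis (Fin r ⊕ Fin r) (ZMod 2) V,
      ∀ i, b (Sum.inl i) = e' i ∧ b (Sum.inr i) = f' i)
    -- both bases are symplectic
    (hef : ∀ i j, Ω (e i) (f j) = if i = j then 1 else 0)
    (hee : ∀ i j, Ω (e i) (e j) = 0) (hff : ∀ i j, Ω (f i) (f j) = 0)
    (hef' : ∀ i j, Ω (e' i) (f' j) = if i = j then 1 else 0)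
    (hee' : ∀ i j, Ω (e' i) (e' j) = 0) (hff' : ∀ i j, Ω (f' i) (f' j) = 0) :
    ∑ i : Fin r, Q (e i) * Q (f i) = ∑ i : Fin r, Q (e' i) * Q (f' i) :=
  stmt7_general Ω Q hQ r e f e' f' hb hb' hef hee hff hef' hee' hff'
end

section
/- Every subdiagram of a 2-finite diagram is 2-finite. Equivalently, a diagram Γ is 2-infinite if and only if Γ contains a subdiagram which is minimal 2-infinite. -/
open Finset

/-! A diagram on a vertex type `V` is encoded by a weight function `w : V → V → ℕ`:
`w i j` is the weight of the directed edge from `i` to `j` (`0` if there is no such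
edge).  A genuine diagram is loopless and has at most one direction between any two
vertices, and the product of the weights along any cycle is a perfect square. -/

/-- No loops. -/
def DiagLoopless {V : Type*} (w : V → V → ℕ) : Prop := ∀ i, w i i = 0

/-- Between any two vertices there is at most one directed edge. -/
def DiagOneDir {V : Type*} (w : V → V → ℕ) : Prop := ∀ i j, w i j = 0 ∨ w j i = 0

/-- The (undirected) weight of the edge between `i` and `j`. -/
def uw {V : Type*} (w : V → V → ℕ) (i j : V) : ℕ := w i j + w j i

/-- The product of the edge weights along any cycle (of length `≥ 3`) is a perfect
square. -/
def CycleSquare {V : Type*} (w : V → V → ℕ) : Prop :=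
  ∀ (m : ℕ) (v : Fin (m + 3) → V), Function.Injective v →
    (∀ t, uw w (v t) (v (t + 1)) ≠ 0) →
    ∃ s : ℕ, (∏ t : Fin (m + 3), uw w (v t) (v (t + 1))) = s ^ 2

/-- Fomin–Zelevinsky diagram mutation at the vertex `k`.  Edges incident to `k` are
reversed with their weights unchanged, and for every oriented two-edge path `i → k → j`
with weights `a`, `b`, the weight `c` of the edge between `i` and `j` is replaced by the
weight `c'` determined by `±√c ± √c' = √(ab)`, the sign before `√c` (resp. `√c'`) being
`+` exactly when `i,j,k` form an oriented cycle in `Γ` (resp. in `μ_k(Γ)`). -/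
def mutate {V : Type*} [DecidableEq V] (w : V → V → ℕ) (k : V) : V → V → ℕ :=
  fun i j =>
    if i = j then 0
    else if j = k then w k i
    else if i = k then w j k
    else if w i k ≠ 0 ∧ w k j ≠ 0 then
      -- oriented two-edge path `i → k → j`
      let a := w i k; let b := w k j; let c := w i j + w j i
      let s := Nat.sqrt (a * b * c)
      if w j i ≠ 0 then
        -- the triangle `i → k → j → i` is oriented in `Γ`: `c' = ab + c − 2√(abc)`,
        -- and the new edge goes from `i` to `j` exactly when `ab ≥ c`
        (if c ≤ a * b then a * b + c - 2 * s else 0)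
      else
        -- non-oriented (or no) triangle: `c' = ab + c + 2√(abc)`, new edge `i → j`
        a * b + c + 2 * s
    else if w j k ≠ 0 ∧ w k i ≠ 0 then
      -- oriented two-edge path `j → k → i`: the new edge goes from `j` to `i`
      -- unless the triangle was oriented in `Γ` with `ab < c`
      let a := w j k; let b := w k i; let c := w i j + w j i
      let s := Nat.sqrt (a * b * c)
      if w i j ≠ 0 ∧ a * b < c then a * b + c - 2 * s else 0
    else w i j

/-- Mutation equivalence of diagrams. -/
def MutEquiv {V : Type*} [DecidableEq V] (w w' : V → V → ℕ) : Prop :=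
  Relation.ReflTransGen (fun x y => ∃ k, y = mutate x k) w w'

/-- A diagram is 2-finite if every mutation-equivalent diagram has all edge weights in
`{1,2,3}`. -/
def TwoFinite {V : Type*} [DecidableEq V] (w : V → V → ℕ) : Prop :=
  ∀ w', MutEquiv w w' → ∀ i j, w' i j ≤ 3

/-- The subdiagram induced on a subset `S` of the vertices. -/
def restrictDiag {V : Type*} (w : V → V → ℕ) (S : Set V) : S → S → ℕ :=
  fun i j => w i j

/-- A diagram is minimal 2-infinite if it is 2-infinite and every proper induced
subdiagram is 2-finite. -/
def MinimalTwoInfinite {V : Type*} [DecidableEq V] (w : V → V → ℕ) : Prop :=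
  ¬ TwoFinite w ∧ ∀ S : Set V, S ≠ Set.univ → TwoFinite (restrictDiag w S)

/-- The underlying undirected graph of a diagram. -/
def toGraph {V : Type*} (w : V → V → ℕ) : SimpleGraph V where
  Adj i j := i ≠ j ∧ uw w i j ≠ 0
  symm := by
    refine ⟨?_⟩
    intro i j h
    refine ⟨h.1.symm, ?_⟩
    have h2 := h.2
    unfold uw at h2 ⊢
    omega
  loopless := by refine ⟨?_⟩; intro i h; exact h.1 rfl

/-- The mod-2 underlying graph of a diagram: `i ∼ j` iff the edge between them has odd
weight. -/
def toGraphMod2 {V : Type*} (w : V → V → ℕ) : SimpleGraph V where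
  Adj i j := i ≠ j ∧ Odd (uw w i j)
  symm := by
    refine ⟨?_⟩
    intro i j h
    refine ⟨h.1.symm, ?_⟩
    have h2 := h.2
    unfold uw at h2 ⊢
    rwa [Nat.add_comm]
  loopless := by refine ⟨?_⟩; intro i h; exact h.1 rfl

/-- The basic move `φ_{c,a}` on an undirected graph: the adjacency between `c` and each
neighbour `v ≠ c` of `a` is toggled, and all other edges are unchanged. -/
def basicMove {V : Type*} (G : SimpleGraph V) (c a : V) : SimpleGraph V where
  Adj u v := Xor' (G.Adj u v)
      ((u = c ∧ v ≠ c ∧ G.Adj a v) ∨ (v = c ∧ u ≠ c ∧ G.Adj a u))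
  symm := by
    refine ⟨?_⟩
    intro u v h
    show Xor' (G.Adj v u) _
    rw [G.adj_comm v u]
    unfold Xor' at h ⊢
    unfold Xor at h ⊢
    tauto
  loopless := by
    refine ⟨?_⟩
    intro u h
    unfold Xor' at h
    rcases h with ⟨h1, _⟩ | ⟨h1, _⟩
    · exact G.irrefl h1
    · rcases h1 with ⟨h2, h3, _⟩ | ⟨h2, h3, _⟩ <;> exact h3 h2

/-- One basic move applied to `G` (at a pair of adjacent vertices). -/
def BMStep {V : Type*} (G G' : SimpleGraph V) : Prop :=
  ∃ c a, G.Adj c a ∧ G' = basicMove G c a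

/-- BM-equivalence: two graphs are related by a sequence of basic moves. -/
def BMEquiv {V : Type*} (G G' : SimpleGraph V) : Prop :=
  Relation.ReflTransGen BMStep G G'

/-- The path (type `A_n`) graph on `n` vertices. -/
def dynA (n : ℕ) : SimpleGraph (Fin n) :=
  SimpleGraph.fromRel (fun i j => (i : ℕ) + 1 = (j : ℕ))

/-- The type `D_n` tree (`n ≥ 4`): a path `1 – 2 – ⋯ – (n−1)` with `0` attached to `2`. -/
def dynD (n : ℕ) : SimpleGraph (Fin n) :=
  SimpleGraph.fromRel (fun i j =>
    ((i : ℕ) = 0 ∧ (j : ℕ) = 2) ∨ ((i : ℕ) + 1 = (j : ℕ) ∧ 1 ≤ (i : ℕ)))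

/-- The type `E_n` tree (`n ∈ {6,7,8}`): a path `0 – 1 – ⋯ – (n−2)` with `n−1` attached
to `2`. -/
def dynE (n : ℕ) : SimpleGraph (Fin n) :=
  SimpleGraph.fromRel (fun i j =>
    ((i : ℕ) + 1 = (j : ℕ) ∧ (j : ℕ) ≤ n - 2) ∨ ((i : ℕ) = 2 ∧ (j : ℕ) = n - 1))

/-- `G` is (isomorphic to) a simply-laced Dynkin graph: type `A`, `D` or `E`. -/
def IsDynkinADE {V : Type*} (G : SimpleGraph V) : Prop :=
  (∃ n, 1 ≤ n ∧ Nonempty (G ≃g dynA n)) ∨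
  (∃ n, 4 ≤ n ∧ Nonempty (G ≃g dynD n)) ∨
  (∃ n, (n = 6 ∨ n = 7 ∨ n = 8) ∧ Nonempty (G ≃g dynE n))

/-- `v` enumerates an induced cycle (of length `m + 3`) in the diagram `w`. -/
def InducedCycleOn {V : Type*} (w : V → V → ℕ) {m : ℕ} (v : Fin (m + 3) → V) : Prop :=
  Function.Injective v ∧
    ∀ s t : Fin (m + 3), s ≠ t → (uw w (v s) (v t) ≠ 0 ↔ (t = s + 1 ∨ s = t + 1))

/-- The diagram contains a non-oriented (induced) cycle as a subdiagram. -/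
def HasNonorientedCycle {V : Type*} (w : V → V → ℕ) : Prop :=
  ∃ (m : ℕ) (v : Fin (m + 3) → V), InducedCycleOn w v ∧
    ¬ ((∀ t, w (v t) (v (t + 1)) ≠ 0) ∨ (∀ t, w (v (t + 1)) (v t) ≠ 0))


/-!
Mutation commutes with passing to an induced subdiagram: mutating the restriction of `w`
at `k` gives the restriction of `μ_k(w)`. Hence every diagram mutation-equivalent to a
subdiagram of `w` is a subdiagram of a diagram mutation-equivalent to `w`, and a weight
larger than `3` in the former is one in the latter. For the characterisation, a
2-infinite diagram on a finite vertex set has an inclusion-minimal 2-infinite subdiagram,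
which is minimal 2-infinite because the proper subdiagrams of a subdiagram are subdiagrams.
-/

def comapDiag {U V : Type*} (f : U → V) (w : V → V → ℕ) : U → U → ℕ :=
  fun i j => w (f i) (f j)

section comapDiag

variable {U V : Type*} [DecidableEq U] [DecidableEq V] {f : U → V}

lemma mutate_comapDiag (hf : Function.Injective f) (w : V → V → ℕ) (k : U) :
    mutate (comapDiag f w) k = comapDiag f (mutate w (f k)) := by
  funext i j
  simp only [mutate, comapDiag, hf.eq_iff]
  rfl

lemma exists_mutEquiv_of_mutEquiv_comapDiag (hf : Function.Injective f) {w : V → V → ℕ}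
    {w' : U → U → ℕ} (h : MutEquiv (comapDiag f w) w') :
    ∃ w'', MutEquiv w w'' ∧ w' = comapDiag f w'' := by
  induction h with
  | refl => exact ⟨w, .refl, rfl⟩
  | tail _ hstep ih =>
    obtain ⟨w'', hw'', rfl⟩ := ih
    obtain ⟨k, rfl⟩ := hstep
    exact ⟨mutate w'' (f k), hw''.tail ⟨f k, rfl⟩, mutate_comapDiag hf w'' k⟩

lemma twoFinite_comapDiag (hf : Function.Injective f) {w : V → V → ℕ} (h : TwoFinite w) :
    TwoFinite (comapDiag f w) := by
  intro w' hw' i j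
  obtain ⟨w'', hw'', rfl⟩ := exists_mutEquiv_of_mutEquiv_comapDiag hf hw'
  exact h w'' hw'' (f i) (f j)

end comapDiag

section restrictDiag

variable {V : Type*} [DecidableEq V] {w : V → V → ℕ}

lemma twoFinite_restrictDiag (h : TwoFinite w) (S : Set V) : TwoFinite (restrictDiag w S) :=
  twoFinite_comapDiag Subtype.val_injective h

lemma twoFinite_restrictDiag_univ_iff : TwoFinite (restrictDiag w Set.univ) ↔ TwoFinite w :=
  ⟨twoFinite_comapDiag (Equiv.Set.univ V).symm.injective, (twoFinite_restrictDiag · _)⟩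

open Set.Notation in
lemma twoFinite_restrictDiag_restrictDiag {S : Set V} {T : Set S}
    (h : TwoFinite (restrictDiag w (↑T : Set V))) : TwoFinite (restrictDiag (restrictDiag w S) T) :=
  twoFinite_comapDiag (Equiv.Set.image Subtype.val T Subtype.val_injective).injective h

open Set.Notation in
lemma minimalTwoInfinite_restrictDiag_of_minimal {S : Set V}
    (hS : Minimal (fun S => ¬ TwoFinite (restrictDiag w S)) S) :
    MinimalTwoInfinite (restrictDiag w S) := by
  refine ⟨hS.prop, fun T hT => ?_⟩
  have hTS : (↑T : Set V) ⊂ S :=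
    Set.image_val_subset.ssubset_of_ne fun h => hT (Set.eq_univ_of_image_val_eq h)
  exact twoFinite_restrictDiag_restrictDiag (not_not.mp (hS.not_prop_of_ssubset hTS))

lemma not_twoFinite_iff_exists_minimalTwoInfinite_restrictDiag [Finite V] :
    ¬ TwoFinite w ↔ ∃ S : Set V, MinimalTwoInfinite (restrictDiag w S) := by
  constructor
  · intro hw
    obtain ⟨S, hS⟩ := exists_minimal_of_wellFoundedLT
      (fun S => ¬ TwoFinite (restrictDiag w S)) ⟨_, twoFinite_restrictDiag_univ_iff.not.mpr hw⟩
    exact ⟨S, minimalTwoInfinite_restrictDiag_of_minimal hS⟩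
  · rintro ⟨S, hS⟩ hw
    exact hS.1 (twoFinite_restrictDiag hw S)

end restrictDiag

theorem stmt10_general {V : Type*} [Fintype V] [DecidableEq V] (w : V → V → ℕ) :
    (TwoFinite w → ∀ S : Set V, TwoFinite (restrictDiag w S)) ∧
    (¬ TwoFinite w ↔ ∃ S : Set V, MinimalTwoInfinite (restrictDiag w S)) :=
  ⟨twoFinite_restrictDiag, not_twoFinite_iff_exists_minimalTwoInfinite_restrictDiag⟩

/-- Every subdiagram of a 2-finite diagram is 2-finite; equivalently, a diagram is
2-infinite iff it contains a minimal 2-infinite subdiagram. -/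
theorem stmt10 {V : Type*} [Fintype V] [DecidableEq V] (w : V → V → ℕ)
    (hloop : DiagLoopless w) (hdir : DiagOneDir w) (hsq : CycleSquare w) :
    (TwoFinite w → ∀ S : Set V, TwoFinite (restrictDiag w S)) ∧
    (¬ TwoFinite w ↔ ∃ S : Set V, MinimalTwoInfinite (restrictDiag w S)) :=
  stmt10_general w
end
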